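/- arXiv:2102.12660 — 5 statements merged into one kernel-verified Lean document; each statement's English description precedes it below -/
import Mathlib

section
/- Let μ > 0 and η > 0 satisfy ημ ≤ 1, let κ > 1 be a real number, and let τ ≥ 1 and T ≥ 0 be integers. Then ∑_{t=0}^{T} (1 − ημ/4)^t · (1 − 1/(2κ))^{⌊t/τ⌋} ≤ 2κτ / (1 − ημ/4). -/
/-!
Since `1 - ημ/4 ≤ 1`, the first factor can be dropped. The remaining sum of `r ^ ⌊t/τ⌋` with
`r = 1 - 1/(2κ)` takes each value `r ^ k` at most `τ` times, so it is at most `τ` times the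
geometric series `∑ r ^ k = 2κ`; finally `2κτ ≤ 2κτ / (1 - ημ/4)`.
-/

open Finset

theorem Finset.sum_range_mul_comp_div {M : Type*} [AddCommMonoid M] (f : ℕ → M) (τ K : ℕ) :
    ∑ t ∈ range (K * τ), f (t / τ) = τ • ∑ k ∈ range K, f k := by
  induction K with
  | zero => simp
  | succ K ih =>
    have hblock : ∀ j ∈ range τ, f ((K * τ + j) / τ) = f K := by
      intro j hj
      have hjτ : j < τ := mem_range.mp hj
      rw [add_comm, Nat.add_mul_div_right _ _ (by omega), Nat.div_eq_of_lt hjτ, zero_add]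
    rw [add_one_mul, sum_range_add, ih, sum_congr rfl hblock, sum_const, card_range,
      sum_range_succ, smul_add]

theorem sum_range_pow_div_le {r : ℝ} (hr0 : 0 ≤ r) (hr1 : r < 1) {τ : ℕ} (hτ : 0 < τ) (n : ℕ) :
    ∑ t ∈ range n, r ^ (t / τ) ≤ τ / (1 - r) :=
  calc ∑ t ∈ range n, r ^ (t / τ)
      ≤ ∑ t ∈ range (n * τ), r ^ (t / τ) :=
        sum_le_sum_of_subset_of_nonneg (range_subset_range.mpr (Nat.le_mul_of_pos_right n hτ))
          fun _ _ _ ↦ pow_nonneg hr0 _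
    _ = τ * ∑ k ∈ range n, r ^ k := by rw [sum_range_mul_comp_div, nsmul_eq_mul]
    _ ≤ τ * (1 / (1 - r)) := by
        gcongr
        simpa [← range_eq_Ico] using geom_sum_Ico_le_of_lt_one (m := 0) (n := n) hr0 hr1
    _ = τ / (1 - r) := mul_one_div _ _

/-- **Summation inequality with block-wise geometric decay (factor 1/4).**
If `0 < μ`, `0 < η`, `η·μ ≤ 1`, `1 < κ`, and `τ ≥ 1`, then
`∑_{t=0}^{T} (1 − ημ/4)^t (1 − 1/(2κ))^{⌊t/τ⌋} ≤ 2κτ/(1 − ημ/4)`. -/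
theorem sum_geom_block_decay_quarter
    (μ η κ : ℝ) (τ T : ℕ)
    (hμ : 0 < μ) (hη : 0 < η) (hημ : η * μ ≤ 1)
    (hκ : 1 < κ) (hτ : 1 ≤ τ) :
    ∑ t ∈ Finset.range (T + 1),
        (1 - η * μ / 4) ^ t * (1 - 1 / (2 * κ)) ^ (t / τ)
      ≤ 2 * κ * (τ : ℝ) / (1 - η * μ / 4) := by
  have hq0 : 0 < 1 - η * μ / 4 := by linarith
  have hq1 : 1 - η * μ / 4 ≤ 1 := by nlinarith [mul_pos hη hμ]
  have hr0 : 0 ≤ 1 - 1 / (2 * κ) := by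
    rw [sub_nonneg, div_le_one (by linarith)]; linarith
  have hr1 : 1 - 1 / (2 * κ) < 1 := by
    have : 0 < 1 / (2 * κ) := by positivity
    linarith
  calc ∑ t ∈ range (T + 1), (1 - η * μ / 4) ^ t * (1 - 1 / (2 * κ)) ^ (t / τ)
      ≤ ∑ t ∈ range (T + 1), (1 - 1 / (2 * κ)) ^ (t / τ) :=
        sum_le_sum fun t _ ↦ mul_le_of_le_one_left (pow_nonneg hr0 _) (pow_le_one₀ hq0.le hq1)
    _ ≤ τ / (1 - (1 - 1 / (2 * κ))) := sum_range_pow_div_le hr0 hr1 hτ _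
    _ = 2 * κ * τ := by rw [sub_sub_cancel, one_div, div_inv_eq_mul, mul_comm]
    _ ≤ 2 * κ * τ / (1 - η * μ / 4) := le_div_self (by positivity) hq0 hq1
end

section
/- Let H be a real Hilbert space, W ⊆ H a nonempty closed convex set, Λ a nonempty set, and F : H × Λ → ℝ such that for each λ ∈ Λ the function w ↦ F(w, λ) is differentiable on H and bounded below on W. Fix μ > 0 and η > 0, and suppose that for every λ ∈ Λ the function F(·, λ) satisfies the (μ, η)-generalized Polyak–Łojasiewicz condition on W. Suppose λ* : H → Λ is such that F(w, λ*(w)) = sup_{λ ∈ Λ} F(w, λ) for every w ∈ W, define Φ(w) := F(w, λ*(w)), and suppose Φ attains its minimum over W at some point w* ∈ W. Then Φ satisfies the (μ, η)-generalized PL condition on W in the sense that for all w ∈ W: (1/(2η²))·‖w − proj_W(w − η·∇_w F(w, λ*(w)))‖² ≥ μ·(Φ(w) − Φ(w*)). -/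
/-- **The robust objective `Φ` inherits the generalized PL condition.**
Let `W` be a nonempty closed convex subset of a real Hilbert space `H` with
nearest-point projection `proj`, `Λ` a nonempty index set, and `F : H → Λ → ℝ`
with each `F(·, λ)` differentiable and bounded below on `W`.  If every `F(·, λ)`
satisfies the `(μ, η)`-generalized Polyak–Łojasiewicz condition on `W`, `λ*`
selects a maximizer of `F(w, ·)` for each `w ∈ W`, `Φ(w) = F(w, λ*(w))`, and `Φ`
attains its minimum over `W` at `w*`, then for all `w ∈ W`:
`(1/(2η²))·‖w − proj(w − η·∇_w F(w, λ*(w)))‖² ≥ μ·(Φ(w) − Φ(w*))`. -/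
theorem phi_satisfies_generalized_PL
    {H : Type*} [NormedAddCommGroup H] [InnerProductSpace ℝ H] [CompleteSpace H]
    {Λ : Type*} [Nonempty Λ]
    (W : Set H) (hWne : W.Nonempty) (hWclosed : IsClosed W) (hWconv : Convex ℝ W)
    (proj : H → H)
    (hproj : ∀ x : H, proj x ∈ W ∧ ∀ y ∈ W, ‖x - proj x‖ ≤ ‖x - y‖)
    (F : H → Λ → ℝ)
    (hdiff : ∀ l : Λ, Differentiable ℝ (fun w => F w l))
    (hbdd : ∀ l : Λ, BddBelow ((fun w => F w l) '' W))
    (μ η : ℝ) (hμ : 0 < μ) (hη : 0 < η)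
    (hPL : ∀ l : Λ, ∀ w ∈ W,
      (1 / (2 * η ^ 2)) * ‖w - proj (w - η • gradient (fun w' => F w' l) w)‖ ^ 2
        ≥ μ * (F w l - sInf ((fun w' => F w' l) '' W)))
    (lam : H → Λ)
    (hlam : ∀ w ∈ W, ∀ l : Λ, F w l ≤ F w (lam w))
    (Φ : H → ℝ) (hΦ : ∀ w, Φ w = F w (lam w))
    (wstar : H) (hwstar : wstar ∈ W) (hmin : ∀ w ∈ W, Φ wstar ≤ Φ w) :
    ∀ w ∈ W,
      (1 / (2 * η ^ 2)) * ‖w - proj (w - η • gradient (fun w' => F w' (lam w)) w)‖ ^ 2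
        ≥ μ * (Φ w - Φ wstar) := by
  intro w hw
  have h1 := hPL (lam w) w hw
  have h2 : sInf ((fun w' => F w' (lam w)) '' W) ≤ Φ wstar := by
    calc sInf ((fun w' => F w' (lam w)) '' W) ≤ F wstar (lam w) :=
          csInf_le (hbdd (lam w)) ⟨wstar, hwstar, rfl⟩
      _ ≤ F wstar (lam wstar) := hlam wstar hwstar (lam w)
      _ = Φ wstar := (hΦ wstar).symm
  have h3 : Φ w - Φ wstar ≤ F w (lam w) - sInf ((fun w' => F w' (lam w)) '' W) := by
    rw [hΦ w]; linarith
  calc μ * (Φ w - Φ wstar) ≤ μ * (F w (lam w) - sInf ((fun w' => F w' (lam w)) '' W)) := by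
        apply mul_le_mul_of_nonneg_left h3 hμ.le
    _ ≤ _ := h1
end

section
/- Let E and H be real Hilbert spaces, Λ ⊆ H a nonempty closed convex set, and F : E × H → ℝ. Let μ, L > 0 and set κ := L/μ. Assume: (i) for every w ∈ E, the map λ ↦ F(w, λ) is differentiable and μ-strongly concave on Λ; (ii) the partial gradient map (w, λ) ↦ ∇_λ F(w, λ) is L-Lipschitz, i.e., ‖∇_λF(w₁, λ₁) − ∇_λF(w₂, λ₂)‖ ≤ L·‖(w₁, λ₁) − (w₂, λ₂)‖ for all pairs; (iii) λ* : E → H satisfies λ*(w) ∈ Λ and F(w, λ*(w)) = max_{λ ∈ Λ} F(w, λ) for every w ∈ E. Then λ* is κ-Lipschitz: ‖λ*(w₁) − λ*(w₂)‖ ≤ κ·‖w₁ − w₂‖ for all w₁, w₂ ∈ E. -/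
/-!
Write `λᵢ = λ*(wᵢ)`. The gradient inequality of the `μ`-strongly concave `F(w₁, ·)`, applied at
`λ₂` and at `λ₁`, together with the first-order optimality conditions `⟪∇F(w₁, λ₁), λ₂ - λ₁⟫ ≤ 0`
and `⟪∇F(w₂, λ₂), λ₁ - λ₂⟫ ≤ 0`, gives
`μ‖λ₁ - λ₂‖² ≤ ⟪∇F(w₁, λ₂) - ∇F(w₂, λ₂), λ₁ - λ₂⟫`. Cauchy–Schwarz and the Lipschitz bound
with equal second arguments turn the right side into `L‖w₁ - w₂‖‖λ₁ - λ₂‖`.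
-/

open Filter Topology InnerProductSpace Gradient

section NormedSpace

variable {E : Type*} [NormedAddCommGroup E] [NormedSpace ℝ E]
  {s : Set E} {m : ℝ} {f : E → ℝ} {f' : StrongDual ℝ E} {x y : E}

lemma StrongConcaveOn.sub_add_le_fderiv (hf : StrongConcaveOn s m f) (hx : x ∈ s) (hy : y ∈ s)
    (hf' : HasFDerivAt f f' y) : f x - f y + m / 2 * ‖x - y‖ ^ 2 ≤ f' (x - y) := by
  have hlower : Tendsto (fun c : ℝ => f x - f y + m / 2 * (1 - c⁻¹) * ‖x - y‖ ^ 2) atTop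
      (𝓝 (f x - f y + m / 2 * ‖x - y‖ ^ 2)) := by
    have := (tendsto_inv_atTop_zero (𝕜 := ℝ)).const_sub 1
    simpa using ((this.const_mul (m / 2)).mul_const (‖x - y‖ ^ 2)).const_add (f x - f y)
  refine le_of_tendsto_of_tendsto hlower (hf'.lim_real (x - y)) ?_
  filter_upwards [eventually_ge_atTop 1] with c hc
  have hc0 : 0 < c := one_pos.trans_le hc
  have hconc := hf.2 hx hy (inv_nonneg.2 hc0.le) (sub_nonneg.2 (inv_le_one_of_one_le₀ hc))
    (add_sub_cancel _ _)
  have hpoint : c⁻¹ • x + (1 - c⁻¹) • y = y + c⁻¹ • (x - y) := by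
    rw [sub_smul, one_smul, smul_sub]; abel
  rw [hpoint] at hconc
  simp only [smul_eq_mul] at hconc ⊢
  linear_combination
    c * hconc - (f x - f y + m / 2 * (1 - c⁻¹) * ‖x - y‖ ^ 2) * mul_inv_cancel₀ hc0.ne'

lemma IsMaxOn.fderiv_sub_nonpos (h : IsMaxOn f s x) (hs : Convex ℝ s) (hx : x ∈ s) (hy : y ∈ s)
    (hf' : HasFDerivAt f f' x) : f' (y - x) ≤ 0 :=
  h.localize.hasFDerivWithinAt_nonpos hf'.hasFDerivWithinAt
    (sub_mem_posTangentConeAt_of_segment_subset (hs.segment_subset hx hy))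

lemma StrongConcaveOn.add_sq_le_of_isMaxOn (hf : StrongConcaveOn s m f) (h : IsMaxOn f s x)
    (hx : x ∈ s) (hy : y ∈ s) (hf' : HasFDerivAt f f' x) :
    f y + m / 2 * ‖y - x‖ ^ 2 ≤ f x := by
  linarith [hf.sub_add_le_fderiv hy hx hf', h.fderiv_sub_nonpos hf.1 hx hy hf']

end NormedSpace

section InnerProductSpace

variable {H : Type*} [NormedAddCommGroup H] [InnerProductSpace ℝ H] [CompleteSpace H]
  {s : Set H} {m : ℝ} {f g : H → ℝ} {x y : H}

lemma StrongConcaveOn.mul_norm_sub_le_of_isMaxOn (hf : StrongConcaveOn s m f)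
    (hfx : IsMaxOn f s x) (hgy : IsMaxOn g s y) (hx : x ∈ s) (hy : y ∈ s)
    (hfdx : DifferentiableAt ℝ f x) (hfdy : DifferentiableAt ℝ f y)
    (hgdy : DifferentiableAt ℝ g y) :
    m * ‖x - y‖ ≤ ‖∇ f y - ∇ g y‖ := by
  have hf_y : f x - f y + m / 2 * ‖x - y‖ ^ 2 ≤ ⟪∇ f y, x - y⟫_ℝ :=
    hf.sub_add_le_fderiv hx hy hfdy.hasGradientAt.hasFDerivAt
  have hf_x : f y + m / 2 * ‖x - y‖ ^ 2 ≤ f x := by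
    simpa only [norm_sub_rev y x] using
      hf.add_sq_le_of_isMaxOn hfx hx hy hfdx.hasGradientAt.hasFDerivAt
  have hg_y : ⟪∇ g y, x - y⟫_ℝ ≤ 0 :=
    hgy.fderiv_sub_nonpos hf.1 hy hx hgdy.hasGradientAt.hasFDerivAt
  have hmono : m * ‖x - y‖ * ‖x - y‖ ≤ ‖∇ f y - ∇ g y‖ * ‖x - y‖ :=
    calc m * ‖x - y‖ * ‖x - y‖ ≤ ⟪∇ f y - ∇ g y, x - y⟫_ℝ := by
          rw [inner_sub_left]; nlinarith
      _ ≤ ‖∇ f y - ∇ g y‖ * ‖x - y‖ := real_inner_le_norm _ _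
  rcases (norm_nonneg (x - y)).eq_or_lt with hxy | hxy
  · rw [← hxy, mul_zero]; exact norm_nonneg _
  · exact le_of_mul_le_mul_right hmono hxy

end InnerProductSpace

theorem lamstar_kappa_lipschitz_general
    {E H : Type*} [NormedAddCommGroup E] [InnerProductSpace ℝ E]
    [NormedAddCommGroup H] [InnerProductSpace ℝ H] [CompleteSpace H]
    (Λ : Set H) (hΛconv : Convex ℝ Λ)
    (F : E → H → ℝ) (μ L : ℝ) (hμ : 0 < μ)
    (κ : ℝ) (hκ : κ = L / μ)
    (hdiff : ∀ w : E, Differentiable ℝ (F w))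
    (hconc : ∀ w : E, ∀ x ∈ Λ, ∀ y ∈ Λ, ∀ a : ℝ, 0 ≤ a → a ≤ 1 →
      a * F w x + (1 - a) * F w y + μ / 2 * a * (1 - a) * ‖x - y‖ ^ 2
        ≤ F w (a • x + (1 - a) • y))
    (hlip : ∀ w₁ w₂ : E, ∀ l₁ l₂ : H,
      ‖gradient (F w₁) l₁ - gradient (F w₂) l₂‖
        ≤ L * Real.sqrt (‖w₁ - w₂‖ ^ 2 + ‖l₁ - l₂‖ ^ 2))
    (lam : E → H)
    (hlam_mem : ∀ w : E, lam w ∈ Λ)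
    (hlam_max : ∀ w : E, ∀ l ∈ Λ, F w l ≤ F w (lam w)) :
    ∀ w₁ w₂ : E, ‖lam w₁ - lam w₂‖ ≤ κ * ‖w₁ - w₂‖ := by
  intro w₁ w₂
  have hstrong : StrongConcaveOn Λ μ (F w₁) := by
    refine ⟨hΛconv, fun x hx y hy a b ha _ hab => ?_⟩
    obtain rfl : b = 1 - a := by linarith
    simp only [smul_eq_mul]
    linear_combination hconc w₁ x hx y hy a ha (by linarith)
  have hmax : ∀ w, IsMaxOn (F w) Λ (lam w) := fun w l hl => hlam_max w l hl
  have hgrad : ‖∇ (F w₁) (lam w₂) - ∇ (F w₂) (lam w₂)‖ ≤ L * ‖w₁ - w₂‖ := by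
    simpa using hlip w₁ w₂ (lam w₂) (lam w₂)
  have hμlam : μ * ‖lam w₁ - lam w₂‖ ≤ L * ‖w₁ - w₂‖ :=
    (hstrong.mul_norm_sub_le_of_isMaxOn (hmax w₁) (hmax w₂) (hlam_mem w₁) (hlam_mem w₂)
      (hdiff w₁ _) (hdiff w₁ _) (hdiff w₂ _)).trans hgrad
  rw [hκ, div_mul_eq_mul_div, le_div_iff₀ hμ]
  linarith

/-- **The maximizer map `λ*` is `κ`-Lipschitz (Lin et al.).**
Let `Λ` be a nonempty closed convex subset of a real Hilbert space `H`,
`F : E × H → ℝ` with each `F(w, ·)` differentiable and `μ`-strongly concave on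
`Λ`, the partial gradient `∇_λ F` jointly `L`-Lipschitz with respect to the
product norm `‖(w, λ)‖ = √(‖w‖² + ‖λ‖²)`, and `λ*(w) ∈ Λ` a maximizer of
`F(w, ·)` over `Λ`.  Then `‖λ*(w₁) − λ*(w₂)‖ ≤ κ·‖w₁ − w₂‖` with `κ = L/μ`. -/
theorem lamstar_kappa_lipschitz
    {E H : Type*} [NormedAddCommGroup E] [InnerProductSpace ℝ E] [CompleteSpace E]
    [NormedAddCommGroup H] [InnerProductSpace ℝ H] [CompleteSpace H]
    (Λ : Set H) (hΛne : Λ.Nonempty) (hΛcl : IsClosed Λ) (hΛconv : Convex ℝ Λ)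
    (F : E → H → ℝ) (μ L : ℝ) (hμ : 0 < μ) (hL : 0 < L)
    (κ : ℝ) (hκ : κ = L / μ)
    (hdiff : ∀ w : E, Differentiable ℝ (F w))
    (hconc : ∀ w : E, ∀ x ∈ Λ, ∀ y ∈ Λ, ∀ a : ℝ, 0 ≤ a → a ≤ 1 →
      a * F w x + (1 - a) * F w y + μ / 2 * a * (1 - a) * ‖x - y‖ ^ 2
        ≤ F w (a • x + (1 - a) • y))
    (hlip : ∀ w₁ w₂ : E, ∀ l₁ l₂ : H,
      ‖gradient (F w₁) l₁ - gradient (F w₂) l₂‖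
        ≤ L * Real.sqrt (‖w₁ - w₂‖ ^ 2 + ‖l₁ - l₂‖ ^ 2))
    (lam : E → H)
    (hlam_mem : ∀ w : E, lam w ∈ Λ)
    (hlam_max : ∀ w : E, ∀ l ∈ Λ, F w l ≤ F w (lam w)) :
    ∀ w₁ w₂ : E, ‖lam w₁ - lam w₂‖ ≤ κ * ‖w₁ - w₂‖ :=
  lamstar_kappa_lipschitz_general Λ hΛconv F μ L hμ κ hκ hdiff hconc hlip lam hlam_mem hlam_max
end

section
/- Let H be a real Hilbert space, Λ ⊆ H a nonempty closed convex set, and f : H → ℝ a differentiable function whose gradient is L-Lipschitz and which is μ-strongly concave on H, with 0 < μ ≤ L. Let λ* ∈ H be the global maximizer of f, and assume λ* ∈ Λ. Then for every λ ∈ Λ, one step of projected gradient ascent with stepsize γ = 1/L satisfies ‖proj_Λ(λ + (1/L)·∇f(λ)) − λ*‖² ≤ (1 − μ/L)·‖λ − λ*‖². -/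
open Set Filter Topology
open scoped RealInnerProductSpace Gradient

/-!
Write `u = λ + ∇f(λ)/L`. A nearest point of a convex set is at least as close as `u` to every
point of the set, so it suffices to bound `‖u - λ*‖²`. As `∇f(λ*) = 0`, this equals
`‖λ - λ*‖² + (2/L)⟪∇f λ, λ - λ*⟫ + ‖∇f λ‖²/L²`. Half of the cross term is controlled by strong
monotonicity, `⟪∇f λ, λ - λ*⟫ ≤ -μ‖λ - λ*‖²`, the other half by co-coercivity,
`⟪∇f λ, λ - λ*⟫ ≤ -‖∇f λ‖²/L`, which cancels the last term.

Co-coercivity of the gradient of a concave function with `L`-Lipschitz gradient comes from the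
quadratic lower bound `f (y + v) ≥ f y + ⟪∇f y, v⟫ - L/2‖v‖²` taken at `v = (∇f y - ∇f x)/L`,
combined with the first-order concavity inequality at `x`.
-/

section InnerProductSpace

variable {F : Type*} [NormedAddCommGroup F] [InnerProductSpace ℝ F]

theorem Convex.norm_sub_le_of_forall_norm_sub_le {K : Set F} (hK : Convex ℝ K) {u v w : F}
    (hv : v ∈ K) (hmin : ∀ w ∈ K, ‖u - v‖ ≤ ‖u - w‖) (hw : w ∈ K) : ‖v - w‖ ≤ ‖u - w‖ := by
  have : Nonempty K := ⟨⟨v, hv⟩⟩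
  have hinf : ‖u - v‖ = ⨅ w : K, ‖u - w‖ :=
    le_antisymm (le_ciInf fun w ↦ hmin w w.2)
      (ciInf_le ⟨0, forall_mem_range.2 fun _ ↦ norm_nonneg _⟩ (⟨v, hv⟩ : K))
  have hangle : ⟪u - v, w - v⟫ ≤ 0 := (norm_eq_iInf_iff_real_inner_le_zero hK hv).1 hinf w hw
  have hexpand : ‖u - w‖ ^ 2 = ‖u - v‖ ^ 2 - 2 * ⟪u - v, w - v⟫ + ‖v - w‖ ^ 2 := by
    rw [← norm_sub_rev w v, show u - w = (u - v) - (w - v) by abel, norm_sub_sq_real]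
  refine (pow_le_pow_iff_left₀ (norm_nonneg _) (norm_nonneg _) two_ne_zero).1 ?_
  linarith [sq_nonneg ‖u - v‖]

theorem norm_add_inv_smul_sq_le {d g : F} {μ L : ℝ} (hL : 0 < L)
    (hmono : ⟪g, d⟫ ≤ -μ * ‖d‖ ^ 2) (hcoco : ⟪g, d⟫ ≤ -(1 / L) * ‖g‖ ^ 2) :
    ‖d + (1 / L) • g‖ ^ 2 ≤ (1 - μ / L) * ‖d‖ ^ 2 := by
  rw [norm_add_sq_real, real_inner_smul_right, norm_smul, Real.norm_of_nonneg (by positivity),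
    real_inner_comm]
  have hL' : 0 ≤ 1 / L := by positivity
  have h₁ := mul_le_mul_of_nonneg_left hmono hL'
  have h₂ := mul_le_mul_of_nonneg_left hcoco hL'
  linear_combination h₁ + h₂

end InnerProductSpace

section Gradient

variable {H : Type*} [NormedAddCommGroup H] [InnerProductSpace ℝ H] [CompleteSpace H]
  {f : H → ℝ} {g g' x y v : H}

theorem HasGradientAt.hasDerivAt_comp_add_smul {t : ℝ} (hf : HasGradientAt f g (y + t • v)) :
    HasDerivAt (fun s : ℝ ↦ f (y + s • v)) ⟪g, v⟫ t := by
  have hline : HasDerivAt (fun s : ℝ ↦ y + s • v) v t := by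
    simpa using ((hasDerivAt_id t).smul_const v).const_add y
  simpa [Function.comp_def] using hf.hasFDerivAt.comp_hasDerivAt t hline

theorem IsLocalMax.hasGradientAt_eq_zero (h : IsLocalMax f x) (hf : HasGradientAt f g x) :
    g = 0 := by
  simpa using h.hasFDerivAt_eq_zero hf.hasFDerivAt

theorem StrongConcaveOn.sub_add_sq_le_inner {s : Set H} {m : ℝ} (hf : StrongConcaveOn s m f)
    (hx : x ∈ s) (hy : y ∈ s) (hg : HasGradientAt f g y) :
    f x - f y + m / 2 * ‖x - y‖ ^ 2 ≤ ⟪g, x - y⟫ := by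
  set φ : ℝ → ℝ := fun a ↦ f (y + a • (x - y))
  have hslope : Tendsto (slope φ 0) (𝓝[>] 0) (𝓝 ⟪g, x - y⟫) := by
    have hφ : HasDerivAt φ ⟪g, x - y⟫ 0 := HasGradientAt.hasDerivAt_comp_add_smul (by simpa)
    exact (hasDerivAt_iff_tendsto_slope.mp hφ).mono_left (nhdsGT_le_nhdsNE 0)
  have hbound : ∀ᶠ a in 𝓝[>] (0 : ℝ),
      f x - f y + m / 2 * (1 - a) * ‖x - y‖ ^ 2 ≤ slope φ 0 a := by
    filter_upwards [Ioo_mem_nhdsGT one_pos] with a ⟨ha₀, ha₁⟩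
    have hconc := hf.2 hx hy ha₀.le (sub_nonneg.2 ha₁.le) (add_sub_cancel a 1)
    rw [show a • x + (1 - a) • y = y + a • (x - y) by module] at hconc
    rw [slope_def_field, le_div_iff₀ (by linarith)]
    simp only [φ, zero_smul, add_zero, smul_eq_mul] at hconc ⊢
    nlinarith
  have hlim : Tendsto (fun a : ℝ ↦ f x - f y + m / 2 * (1 - a) * ‖x - y‖ ^ 2) (𝓝[>] 0)
      (𝓝 (f x - f y + m / 2 * ‖x - y‖ ^ 2)) := by
    refine tendsto_nhdsWithin_of_tendsto_nhds (Continuous.tendsto' ?_ 0 _ (by simp))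
    fun_prop
  exact le_of_tendsto_of_tendsto hlim hslope hbound

theorem StrongConcaveOn.inner_sub_le {s : Set H} {m : ℝ} (hf : StrongConcaveOn s m f)
    (hx : x ∈ s) (hy : y ∈ s) (hgx : HasGradientAt f g x) (hgy : HasGradientAt f g' y) :
    ⟪g - g', x - y⟫ ≤ -m * ‖x - y‖ ^ 2 := by
  have hxy := hf.sub_add_sq_le_inner hx hy hgy
  have hyx := hf.sub_add_sq_le_inner hy hx hgx
  rw [norm_sub_rev, ← neg_sub x y, inner_neg_right] at hyx
  rw [inner_sub_left]
  linarith

theorem add_inner_gradient_sub_le_of_lipschitz {L : ℝ} (hf : Differentiable ℝ f)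
    (hlip : ∀ x y, ‖∇ f x - ∇ f y‖ ≤ L * ‖x - y‖) (y v : H) :
    f y + ⟪∇ f y, v⟫ - L / 2 * ‖v‖ ^ 2 ≤ f (y + v) := by
  set φ : ℝ → ℝ := fun t ↦ f (y + t • v) - t * ⟪∇ f y, v⟫ + L / 2 * t ^ 2 * ‖v‖ ^ 2
  have hφ : ∀ t, HasDerivAt φ (⟪∇ f (y + t • v), v⟫ - ⟪∇ f y, v⟫ + L * t * ‖v‖ ^ 2) t := by
    intro t
    have := (((hf (y + t • v)).hasGradientAt.hasDerivAt_comp_add_smul).sub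
      ((hasDerivAt_id t).mul_const ⟪∇ f y, v⟫)).add
      (((hasDerivAt_pow 2 t).const_mul (L / 2)).mul_const (‖v‖ ^ 2))
    refine this.congr_deriv ?_
    simp only [Nat.cast_ofNat, Nat.add_one_sub_one, pow_one]
    ring
  have hmono : MonotoneOn φ (Icc 0 1) := by
    refine monotoneOn_of_hasDerivWithinAt_nonneg (convex_Icc 0 1)
      (fun t _ ↦ (hφ t).continuousAt.continuousWithinAt) (fun t _ ↦ (hφ t).hasDerivWithinAt) ?_
    rw [interior_Icc]
    rintro t ⟨ht, -⟩
    have hclose : ‖∇ f (y + t • v) - ∇ f y‖ ≤ L * t * ‖v‖ := by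
      simpa [norm_smul, abs_of_pos ht, mul_assoc] using hlip (y + t • v) y
    have hcs := abs_real_inner_le_norm (∇ f (y + t • v) - ∇ f y) v
    rw [inner_sub_left] at hcs
    nlinarith [neg_abs_le (⟪∇ f (y + t • v), v⟫ - ⟪∇ f y, v⟫), norm_nonneg v]
  have hends := hmono (left_mem_Icc.2 zero_le_one) (right_mem_Icc.2 zero_le_one) zero_le_one
  simp only [φ, zero_smul, one_smul, add_zero, zero_mul, sub_zero, ne_eq, OfNat.ofNat_ne_zero,
    not_false_eq_true, zero_pow, mul_zero, one_mul, one_pow, mul_one] at hends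
  linarith

theorem ConcaveOn.sq_norm_gradient_sub_le_of_lipschitz {L : ℝ} (hconc : ConcaveOn ℝ univ f)
    (hf : Differentiable ℝ f) (hlip : ∀ x y, ‖∇ f x - ∇ f y‖ ≤ L * ‖x - y‖) (hL : 0 < L)
    (x y : H) : 1 / (2 * L) * ‖∇ f y - ∇ f x‖ ^ 2 ≤ f x - f y + ⟪∇ f x, y - x⟫ := by
  set d := ∇ f y - ∇ f x
  have hdescent := add_inner_gradient_sub_le_of_lipschitz hf hlip y ((1 / L) • d)
  have hfirst := (strongConcaveOn_zero.2 hconc).sub_add_sq_le_inner (mem_univ (y + (1 / L) • d))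
    (mem_univ x) (hf x).hasGradientAt
  rw [show y + (1 / L) • d - x = (y - x) + (1 / L) • d by abel, inner_add_right] at hfirst
  rw [real_inner_smul_right, norm_smul, Real.norm_of_nonneg (by positivity)] at hdescent
  rw [real_inner_smul_right] at hfirst
  have hd : ⟪∇ f y, d⟫ - ⟪∇ f x, d⟫ = ‖d‖ ^ 2 := by
    rw [← inner_sub_left, real_inner_self_eq_norm_sq]
  field_simp at hdescent hfirst ⊢
  linarith

theorem ConcaveOn.inner_gradient_sub_le_of_lipschitz {L : ℝ} (hconc : ConcaveOn ℝ univ f)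
    (hf : Differentiable ℝ f) (hlip : ∀ x y, ‖∇ f x - ∇ f y‖ ≤ L * ‖x - y‖) (hL : 0 < L)
    (x y : H) : ⟪∇ f x - ∇ f y, x - y⟫ ≤ -(1 / L) * ‖∇ f x - ∇ f y‖ ^ 2 := by
  have hxy := hconc.sq_norm_gradient_sub_le_of_lipschitz hf hlip hL x y
  have hyx := hconc.sq_norm_gradient_sub_le_of_lipschitz hf hlip hL y x
  rw [norm_sub_rev, ← neg_sub x y, inner_neg_right] at hxy
  rw [inner_sub_left]
  field_simp at hxy hyx ⊢
  linarith

end Gradient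

theorem projected_gradient_ascent_contraction_general
    {H : Type*} [NormedAddCommGroup H] [InnerProductSpace ℝ H] [CompleteSpace H]
    (Λ : Set H) (hΛconv : Convex ℝ Λ)
    (proj : H → H)
    (hproj : ∀ x : H, proj x ∈ Λ ∧ ∀ y ∈ Λ, ‖x - proj x‖ ≤ ‖x - y‖)
    (f : H → ℝ) (hdiff : Differentiable ℝ f)
    (L μ : ℝ) (hμ : 0 < μ) (hμL : μ ≤ L)
    (hlip : ∀ x y : H, ‖gradient f x - gradient f y‖ ≤ L * ‖x - y‖)
    (hconc : ∀ x y : H, ∀ a : ℝ, 0 ≤ a → a ≤ 1 →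
      a * f x + (1 - a) * f y + μ / 2 * a * (1 - a) * ‖x - y‖ ^ 2
        ≤ f (a • x + (1 - a) • y))
    (lamstar : H) (hmem : lamstar ∈ Λ) (hmax : ∀ x : H, f x ≤ f lamstar) :
    ∀ l ∈ Λ,
      ‖proj (l + (1 / L) • gradient f l) - lamstar‖ ^ 2
        ≤ (1 - μ / L) * ‖l - lamstar‖ ^ 2 := by
  intro l _
  have hL : 0 < L := hμ.trans_le hμL
  have hstrong : StrongConcaveOn univ μ f := by
    refine ⟨convex_univ, fun x _ y _ a b ha hb hab ↦ ?_⟩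
    obtain rfl : b = 1 - a := by linarith
    convert hconc x y a ha (by linarith) using 1
    simp only [smul_eq_mul]
    ring
  have hgrad_max : ∇ f lamstar = 0 :=
    IsLocalMax.hasGradientAt_eq_zero (Eventually.of_forall hmax) (hdiff lamstar).hasGradientAt
  have hmono := hstrong.inner_sub_le (mem_univ l) (mem_univ lamstar) (hdiff l).hasGradientAt
    (hdiff lamstar).hasGradientAt
  have hcoco := (strongConcaveOn_zero.1 (hstrong.mono hμ.le)).inner_gradient_sub_le_of_lipschitz
    hdiff hlip hL l lamstar
  rw [hgrad_max, sub_zero] at hmono hcoco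
  calc ‖proj (l + (1 / L) • ∇ f l) - lamstar‖ ^ 2 ≤ ‖l + (1 / L) • ∇ f l - lamstar‖ ^ 2 := by
        gcongr
        exact hΛconv.norm_sub_le_of_forall_norm_sub_le (hproj _).1 (hproj _).2 hmem
    _ = ‖(l - lamstar) + (1 / L) • ∇ f l‖ ^ 2 := by rw [add_sub_right_comm]
    _ ≤ (1 - μ / L) * ‖l - lamstar‖ ^ 2 := norm_add_inv_smul_sq_le hL hmono hcoco

/-- **One-step contraction of projected gradient ascent.**
Let `Λ` be a nonempty closed convex subset of a real Hilbert space `H` with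
nearest-point projection `proj`, and let `f : H → ℝ` be differentiable with
`L`-Lipschitz gradient and `μ`-strongly concave on `H`, `0 < μ ≤ L`.  If
`λ* ∈ Λ` is the global maximizer of `f`, then for every `λ ∈ Λ`, one projected
gradient-ascent step with stepsize `1/L` satisfies
`‖proj(λ + (1/L)∇f(λ)) − λ*‖² ≤ (1 − μ/L)·‖λ − λ*‖²`. -/
theorem projected_gradient_ascent_contraction
    {H : Type*} [NormedAddCommGroup H] [InnerProductSpace ℝ H] [CompleteSpace H]
    (Λ : Set H) (hΛne : Λ.Nonempty) (hΛcl : IsClosed Λ) (hΛconv : Convex ℝ Λ)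
    (proj : H → H)
    (hproj : ∀ x : H, proj x ∈ Λ ∧ ∀ y ∈ Λ, ‖x - proj x‖ ≤ ‖x - y‖)
    (f : H → ℝ) (hdiff : Differentiable ℝ f)
    (L μ : ℝ) (hμ : 0 < μ) (hμL : μ ≤ L)
    (hlip : ∀ x y : H, ‖gradient f x - gradient f y‖ ≤ L * ‖x - y‖)
    (hconc : ∀ x y : H, ∀ a : ℝ, 0 ≤ a → a ≤ 1 →
      a * f x + (1 - a) * f y + μ / 2 * a * (1 - a) * ‖x - y‖ ^ 2
        ≤ f (a • x + (1 - a) • y))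
    (lamstar : H) (hmem : lamstar ∈ Λ) (hmax : ∀ x : H, f x ≤ f lamstar) :
    ∀ l ∈ Λ,
      ‖proj (l + (1 / L) • gradient f l) - lamstar‖ ^ 2
        ≤ (1 - μ / L) * ‖l - lamstar‖ ^ 2 :=
  projected_gradient_ascent_contraction_general Λ hΛconv proj hproj f hdiff L μ hμ hμL hlip hconc
    lamstar hmem hmax
end

section
/- Let E and H be real Hilbert spaces, Λ ⊆ H a nonempty closed convex set, and F : E × H → ℝ. Let 0 < μ < L and set κ := L/μ. Assume: (i) for every w ∈ E, the map λ ↦ F(w, λ) is differentiable and μ-strongly concave on H with a global maximizer λ*(w) that lies in Λ; (ii) the partial gradient map (w, λ) ↦ ∇_λ F(w, λ) is L-Lipschitz with respect to the product norm. Let η > 0, G ≥ 0, and let τ ≥ 1 and S ≥ 1 be integers with T = S·τ. Let (w^{(t)})_{t=0}^{T} be points of E satisfying ‖w^{(t+1)} − w^{(t)}‖ ≤ η·G for all 0 ≤ t < T, let λ^{(0)} ∈ Λ, and define λ^{(s+1)} := proj_Λ(λ^{(s)} + (1/L)·∇_λ F(w^{(sτ)}, λ^{(s)})) for s = 0, …,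 S−1. Then for every t with 0 ≤ t ≤ T: ‖λ*(w^{(t)}) − λ^{(⌊t/τ⌋)}‖² ≤ 2·(1 − 1/(2κ))^{⌊t/τ⌋}·‖λ^{(0)} − λ*(w^{(0)})‖² + 2·(4κ² + 1)·κ²·τ²·η²·G². -/
/-!
The maximizer `λ*(w)` is the zero of `∇_λ F(w, ·)`. Strong monotonicity of this gradient together
with its `L`-Lipschitz dependence on `w` makes `λ*` a `κ`-Lipschitz map, so during one round of `τ`
primal steps the target moves by at most `κτηG`. Strong concavity and `L`-smoothness (through
co-coercivity of the gradient) make the projected ascent step with step size `1/L` a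
`(1 - 1/κ)`-contraction of the squared distance to the current target. Young's inequality with
weight `1/(2κ - 1)` merges contraction and drift into a recursion for the squared gap
`a_s = ‖λ^{(s)} - λ*(w^{(sτ)})‖²`, namely `a_{s+1} ≤ (1 - 1/(2κ)) a_s + 2κ · κ²τ²η²G²`, which unrolls
geometrically; a last triangle inequality passes from the round start `sτ` to `t`.
-/

open Filter Set Topology
open scoped InnerProductSpace

section Optimization

variable {H : Type*} [NormedAddCommGroup H] [InnerProductSpace ℝ H] {f : H → ℝ} {μ L : ℝ}

theorem strongConcaveOn_univ_of_forall
    (hf : ∀ x y : H, ∀ a : ℝ, 0 ≤ a → a ≤ 1 →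
      a * f x + (1 - a) * f y + μ / 2 * a * (1 - a) * ‖x - y‖ ^ 2 ≤ f (a • x + (1 - a) • y)) :
    StrongConcaveOn univ μ f := by
  refine ⟨convex_univ, fun x _ y _ a b ha hb hab => ?_⟩
  obtain rfl : b = 1 - a := by linarith
  simpa only [smul_eq_mul, mul_assoc, mul_left_comm] using hf x y a ha (by linarith)

theorem Convex.norm_sub_le_of_forall_norm_sub_le_s9 {Λ : Set H} (hΛ : Convex ℝ Λ) {x p q : H}
    (hp : p ∈ Λ) (hmin : ∀ y ∈ Λ, ‖x - p‖ ≤ ‖x - y‖) (hq : q ∈ Λ) : ‖p - q‖ ≤ ‖x - q‖ := by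
  have : Nonempty Λ := ⟨⟨p, hp⟩⟩
  have hinf : ‖x - p‖ = ⨅ y : Λ, ‖x - y‖ :=
    le_antisymm (le_ciInf fun y => hmin y y.2)
      (ciInf_le (⟨0, forall_mem_range.2 fun _ => norm_nonneg _⟩ :
        BddBelow (range fun y : Λ => ‖x - y‖)) ⟨p, hp⟩)
  have hvar := (norm_eq_iInf_iff_real_inner_le_zero hΛ hp).1 hinf q hq
  have hsplit : x - q = (x - p) + (p - q) := by abel
  rw [← pow_le_pow_iff_left₀ (norm_nonneg _) (norm_nonneg _) two_ne_zero, hsplit,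
    norm_add_sq_real, ← neg_sub q p, inner_neg_right]
  nlinarith [norm_nonneg (x - p)]

variable [CompleteSpace H]

theorem IsLocalMax.gradient_eq_zero {x : H} (h : IsLocalMax f x) : gradient f x = 0 := by
  simp [gradient, h.fderiv_eq_zero]

theorem StrongConcaveOn.sub_add_le_inner_gradient (hf : StrongConcaveOn univ μ f) {y : H}
    (hd : DifferentiableAt ℝ f y) (x : H) :
    f x - f y + μ / 2 * ‖x - y‖ ^ 2 ≤ ⟪gradient f y, x - y⟫_ℝ := by
  set φ : ℝ → ℝ := fun a => f (y + a • (x - y))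
  have hφ : HasDerivAt φ ⟪gradient f y, x - y⟫_ℝ 0 := by
    have hline := ((hasDerivAt_id (0 : ℝ)).smul_const (x - y)).const_add y
    have hfy : HasFDerivAt f (InnerProductSpace.toDual ℝ H (gradient f y))
        (y + (0 : ℝ) • (x - y)) := by
      simpa using hd.hasGradientAt.hasFDerivAt
    simpa [φ, Function.comp_def] using hfy.comp_hasDerivAt (0 : ℝ) hline
  have hlower : ∀ᶠ a in 𝓝[>] (0 : ℝ),
      f x - f y + μ / 2 * (1 - a) * ‖x - y‖ ^ 2 ≤ a⁻¹ • (φ (0 + a) - φ 0) := by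
    filter_upwards [Ioc_mem_nhdsGT (zero_lt_one' ℝ)] with a ⟨ha0, ha1⟩
    have hcomb := hf.2 (mem_univ x) (mem_univ y) ha0.le (sub_nonneg.2 ha1) (add_sub_cancel a 1)
    have hφa : φ a = f (a • x + (1 - a) • y) := by simp only [φ]; congr 1; module
    rw [smul_eq_mul, zero_add, le_inv_mul_iff₀ ha0, hφa]
    simp only [φ, zero_smul, add_zero, smul_eq_mul] at hcomb ⊢
    linarith
  have hlim : Tendsto (fun a : ℝ => f x - f y + μ / 2 * (1 - a) * ‖x - y‖ ^ 2) (𝓝[>] 0)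
      (𝓝 (f x - f y + μ / 2 * ‖x - y‖ ^ 2)) := by
    have hcont : Continuous fun a : ℝ => f x - f y + μ / 2 * (1 - a) * ‖x - y‖ ^ 2 := by
      fun_prop
    simpa using (hcont.tendsto 0).mono_left nhdsWithin_le_nhds
  exact le_of_tendsto_of_tendsto hlim hφ.tendsto_slope_zero_right hlower

theorem StrongConcaveOn.mul_norm_sub_sq_le_inner_gradient_sub (hf : StrongConcaveOn univ μ f)
    {x y : H} (hx : DifferentiableAt ℝ f x) (hy : DifferentiableAt ℝ f y) :
    μ * ‖x - y‖ ^ 2 ≤ ⟪gradient f y - gradient f x, x - y⟫_ℝ := by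
  have hxy := hf.sub_add_le_inner_gradient hy x
  have hyx := hf.sub_add_le_inner_gradient hx y
  rw [← neg_sub x y, inner_neg_right, norm_neg] at hyx
  rw [inner_sub_left]
  linarith

theorem le_apply_add_of_lipschitz_gradient (hd : Differentiable ℝ f)
    (hlip : ∀ a b, ‖gradient f a - gradient f b‖ ≤ L * ‖a - b‖) (x u : H) :
    f x + ⟪gradient f x, u⟫_ℝ - L / 2 * ‖u‖ ^ 2 ≤ f (x + u) := by
  set ψ : ℝ → ℝ := fun t => f (x + t • u) - t * ⟪gradient f x, u⟫_ℝ + L / 2 * ‖u‖ ^ 2 * t ^ 2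
  have hψ : ∀ t, HasDerivAt ψ
      (⟪gradient f (x + t • u), u⟫_ℝ - ⟪gradient f x, u⟫_ℝ + L * ‖u‖ ^ 2 * t) t := by
    intro t
    have hline := ((hasDerivAt_id t).smul_const u).const_add x
    have hf := (hd (x + t • u)).hasGradientAt.hasFDerivAt.comp_hasDerivAt t hline
    simp only [id, one_smul, InnerProductSpace.toDual_apply_apply] at hf
    refine ((hf.sub ((hasDerivAt_id t).mul_const _)).add
      (((hasDerivAt_id t).pow 2).const_mul (L / 2 * ‖u‖ ^ 2))).congr_deriv ?_
    simp only [id]; ring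
  have hmono : MonotoneOn ψ (Icc 0 1) := by
    refine monotoneOn_of_hasDerivWithinAt_nonneg (convex_Icc 0 1)
      (fun t _ => (hψ t).continuousAt.continuousWithinAt) (fun t _ => (hψ t).hasDerivWithinAt)
      fun t ht => ?_
    rw [interior_Icc] at ht
    have hnear : ‖gradient f (x + t • u) - gradient f x‖ ≤ L * (t * ‖u‖) := by
      simpa [norm_smul, abs_of_pos ht.1] using hlip (x + t • u) x
    have hcs := abs_real_inner_le_norm (gradient f (x + t • u) - gradient f x) u
    rw [inner_sub_left] at hcs
    nlinarith [abs_le.1 hcs, norm_nonneg u]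
  have h01 := hmono (left_mem_Icc.2 zero_le_one) (right_mem_Icc.2 zero_le_one) zero_le_one
  simp only [ψ, zero_smul, add_zero, one_smul, zero_mul, sub_zero, one_mul, one_pow, mul_one,
    zero_pow two_ne_zero, mul_zero] at h01
  linarith

theorem ConcaveOn.norm_gradient_sub_sq_le (hf : ConcaveOn ℝ univ f) (hL : 0 < L)
    (hd : Differentiable ℝ f) (hlip : ∀ a b, ‖gradient f a - gradient f b‖ ≤ L * ‖a - b‖)
    (x y : H) :
    ‖gradient f x - gradient f y‖ ^ 2 ≤ L * ⟪gradient f y - gradient f x, x - y⟫_ℝ := by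
  have hf₀ : StrongConcaveOn univ 0 f := strongConcaveOn_zero.2 hf
  -- Step from `a` by `(1 / L) • (∇f a - ∇f b)`, then compare with the tangent plane at `b`.
  have key : ∀ a b : H, f a - f b + 1 / (2 * L) * ‖gradient f a - gradient f b‖ ^ 2
      ≤ ⟪gradient f b, a - b⟫_ℝ := by
    intro a b
    set d := gradient f a - gradient f b
    have hascent := le_apply_add_of_lipschitz_gradient hd hlip a ((1 / L) • d)
    have htangent := hf₀.sub_add_le_inner_gradient (hd b) (a + (1 / L) • d)
    rw [zero_div, zero_mul, add_zero, add_sub_right_comm, inner_add_right] at htangent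
    have hd_sq : ⟪gradient f a, d⟫_ℝ - ⟪gradient f b, d⟫_ℝ = ‖d‖ ^ 2 := by
      rw [← inner_sub_left, real_inner_self_eq_norm_sq]
    rw [real_inner_smul_right, norm_smul, Real.norm_of_nonneg (by positivity)] at hascent
    rw [real_inner_smul_right] at htangent
    have hquad : L / 2 * (1 / L * ‖d‖) ^ 2 = 1 / (2 * L) * ‖d‖ ^ 2 := by field_simp
    have hcross : 1 / L * ⟪gradient f a, d⟫_ℝ - 1 / L * ⟪gradient f b, d⟫_ℝ
        = 2 * (1 / (2 * L) * ‖d‖ ^ 2) := by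
      rw [← mul_sub, hd_sq]; field_simp
    linarith
  have hxy := key x y
  have hyx := key y x
  rw [← neg_sub x y, inner_neg_right, norm_sub_rev] at hyx
  rw [inner_sub_left, ← div_le_iff₀' hL]
  have : ‖gradient f x - gradient f y‖ ^ 2 / L
      = 2 * (1 / (2 * L) * ‖gradient f x - gradient f y‖ ^ 2) := by field_simp
  linarith

theorem StrongConcaveOn.norm_gradient_step_sub_sq_le (hf : StrongConcaveOn univ μ f)
    (hμ : 0 ≤ μ) (hL : 0 < L) (hd : Differentiable ℝ f)
    (hlip : ∀ a b, ‖gradient f a - gradient f b‖ ≤ L * ‖a - b‖) (x y : H) :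
    ‖(x + (1 / L) • gradient f x) - (y + (1 / L) • gradient f y)‖ ^ 2
      ≤ (1 - μ / L) * ‖x - y‖ ^ 2 := by
  have hcoco := (strongConcaveOn_zero.1 (hf.mono hμ)).norm_gradient_sub_sq_le hL hd hlip x y
  have hmono := hf.mul_norm_sub_sq_le_inner_gradient_sub (hd x) (hd y)
  rw [← neg_sub (gradient f x) (gradient f y), inner_neg_left] at hcoco hmono
  set e := gradient f x - gradient f y
  have hstep : (x + (1 / L) • gradient f x) - (y + (1 / L) • gradient f y)
      = (x - y) + (1 / L) • e := by module
  rw [hstep, norm_add_sq_real, real_inner_smul_right, norm_smul,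
    Real.norm_of_nonneg (by positivity), real_inner_comm]
  have hquad : (1 / L * ‖e‖) ^ 2 ≤ 1 / L * -⟪e, x - y⟫_ℝ := by
    rw [mul_pow, sq (1 / L), mul_assoc]
    exact mul_le_mul_of_nonneg_left (by rw [one_div, inv_mul_le_iff₀ hL]; linarith)
      (by positivity)
  have hcross : μ / L * ‖x - y‖ ^ 2 ≤ 1 / L * -⟪e, x - y⟫_ℝ := by
    rw [div_mul_eq_mul_div, one_div_mul_eq_div]
    exact div_le_div_of_nonneg_right hmono hL.le
  nlinarith

theorem StrongConcaveOn.norm_proj_gradient_step_sub_sq_le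
    (hf : StrongConcaveOn univ μ f) (hμ : 0 ≤ μ) (hL : 0 < L) (hd : Differentiable ℝ f)
    (hlip : ∀ a b, ‖gradient f a - gradient f b‖ ≤ L * ‖a - b‖) {Λ : Set H} (hΛ : Convex ℝ Λ)
    {proj : H → H} (hproj : ∀ x, proj x ∈ Λ ∧ ∀ y ∈ Λ, ‖x - proj x‖ ≤ ‖x - y‖) {p : H}
    (hp : p ∈ Λ) (hgp : gradient f p = 0) (x : H) :
    ‖proj (x + (1 / L) • gradient f x) - p‖ ^ 2 ≤ (1 - μ / L) * ‖x - p‖ ^ 2 :=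
  calc ‖proj (x + (1 / L) • gradient f x) - p‖ ^ 2
      ≤ ‖(x + (1 / L) • gradient f x) - (p + (1 / L) • gradient f p)‖ ^ 2 := by
        rw [hgp, smul_zero, add_zero]
        gcongr
        exact hΛ.norm_sub_le_of_forall_norm_sub_le_s9 (hproj _).1 (hproj _).2 hp
    _ ≤ (1 - μ / L) * ‖x - p‖ ^ 2 := hf.norm_gradient_step_sub_sq_le hμ hL hd hlip x p

theorem norm_maximizer_sub_le {E : Type*} [SeminormedAddCommGroup E] {F : E → H → ℝ}
    {lam : E → H} (hμ : 0 < μ) (hsc : ∀ w, StrongConcaveOn univ μ (F w))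
    (hd : ∀ w, Differentiable ℝ (F w))
    (hgrad : ∀ w, gradient (F w) (lam w) = 0)
    (hlip : ∀ w₁ w₂ l, ‖gradient (F w₁) l - gradient (F w₂) l‖ ≤ L * ‖w₁ - w₂‖) (w₁ w₂ : E) :
    ‖lam w₁ - lam w₂‖ ≤ L / μ * ‖w₁ - w₂‖ := by
  have hmono := (hsc w₁).mul_norm_sub_sq_le_inner_gradient_sub (hd w₁ (lam w₁)) (hd w₁ (lam w₂))
  rw [hgrad w₁, sub_zero, ← sub_zero (gradient (F w₁) (lam w₂)), ← hgrad w₂] at hmono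
  have hcs := (real_inner_le_norm _ _).trans
    (mul_le_mul_of_nonneg_right (hlip w₁ w₂ (lam w₂)) (norm_nonneg (lam w₁ - lam w₂)))
  rw [div_mul_eq_mul_div, le_div_iff₀ hμ]
  rcases (norm_nonneg (lam w₁ - lam w₂)).eq_or_lt with h0 | hpos
  · rw [← h0, zero_mul]
    exact (norm_nonneg _).trans (hlip w₁ w₂ (lam w₂))
  · nlinarith

end Optimization

section Tracking

variable {E : Type*} [SeminormedAddCommGroup E]

theorem norm_sub_sq_le_of_norm_succ_sub_le {w : ℕ → E} {c : ℝ} {m n τ : ℕ} (hmn : m ≤ n)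
    (hnτ : n ≤ m + τ) (hw : ∀ k, m ≤ k → k < n → ‖w (k + 1) - w k‖ ≤ c) :
    ‖w n - w m‖ ^ 2 ≤ τ ^ 2 * c ^ 2 := by
  have hsum := dist_le_Ico_sum_of_dist_le (f := w) (d := fun _ => c) hmn fun hk hk' => by
    rw [dist_comm, dist_eq_norm]; exact hw _ hk hk'
  rw [Finset.sum_const, Nat.card_Ico, nsmul_eq_mul, dist_comm, dist_eq_norm] at hsum
  have hgap : ((n - m : ℕ) : ℝ) ^ 2 ≤ (τ : ℝ) ^ 2 := by
    exact_mod_cast Nat.pow_le_pow_left (by omega) 2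
  calc ‖w n - w m‖ ^ 2 ≤ (((n - m : ℕ) : ℝ) * c) ^ 2 :=
        pow_le_pow_left₀ (norm_nonneg _) hsum 2
    _ = ((n - m : ℕ) : ℝ) ^ 2 * c ^ 2 := mul_pow _ _ _
    _ ≤ τ ^ 2 * c ^ 2 := mul_le_mul_of_nonneg_right hgap (sq_nonneg c)

theorem norm_add_sq_le_of_norm_sq_le {u v : E} {κ a D : ℝ} (hκ : 1 < κ)
    (hu : ‖u‖ ^ 2 ≤ (1 - 1 / κ) * a) (hv : ‖v‖ ^ 2 ≤ D) :
    ‖u + v‖ ^ 2 ≤ (1 - 1 / (2 * κ)) * a + 2 * κ * D := by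
  have hκ0 : 0 < κ := one_pos.trans hκ
  have hc : 0 < 2 * κ - 1 := by linarith
  have ha : 0 ≤ a := nonneg_of_mul_nonneg_right ((sq_nonneg _).trans hu)
    (by rw [sub_pos, div_lt_one hκ0]; exact hκ)
  -- Young's inequality with weight `1 / (2κ - 1)`, chosen so that the weight of `‖v‖²` is `2κ`.
  have hyoung : (2 * κ - 1) * (‖u‖ + ‖v‖) ^ 2
      ≤ 2 * κ * ‖u‖ ^ 2 + (2 * κ - 1) * (2 * κ * ‖v‖ ^ 2) := by
    nlinarith [sq_nonneg (‖u‖ - (2 * κ - 1) * ‖v‖)]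
  have hcoef : (2 * κ - 1) * (1 - 1 / (2 * κ)) = 2 * κ * (1 - 1 / κ) + 1 / (2 * κ) := by
    field_simp; ring
  refine le_of_mul_le_mul_left ?_ hc
  calc (2 * κ - 1) * ‖u + v‖ ^ 2 ≤ (2 * κ - 1) * (‖u‖ + ‖v‖) ^ 2 := by
        gcongr; exact norm_add_le u v
    _ ≤ 2 * κ * ((1 - 1 / κ) * a) + (2 * κ - 1) * (2 * κ * D) := by
        grw [← hu, ← hv]; exact hyoung
    _ ≤ (2 * κ - 1) * ((1 - 1 / (2 * κ)) * a + 2 * κ * D) := by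
        linear_combination (-a) * hcoef + mul_nonneg (one_div_pos.2 (mul_pos two_pos hκ0)).le ha

theorem le_pow_mul_add_of_le_mul_add {a : ℕ → ℝ} {r C : ℝ} {S : ℕ} (hr : 0 ≤ r)
    (h : ∀ s < S, a (s + 1) ≤ r * a s + (1 - r) * C) :
    ∀ s ≤ S, a s ≤ r ^ s * a 0 + (1 - r ^ s) * C := by
  intro s hs
  induction s with
  | zero => simp
  | succ s ih =>
    calc a (s + 1) ≤ r * a s + (1 - r) * C := h s hs
      _ ≤ r * (r ^ s * a 0 + (1 - r ^ s) * C) + (1 - r) * C := by gcongr; exact ih (by omega)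
      _ = r ^ (s + 1) * a 0 + (1 - r ^ (s + 1)) * C := by ring

theorem norm_target_sub_iterate_sq_le {x p : ℕ → E} {κ D : ℝ} {τ S : ℕ} (hκ : 1 < κ) (hτ : 1 ≤ τ)
    (hcontr : ∀ s < S, ‖x (s + 1) - p (s * τ)‖ ^ 2 ≤ (1 - 1 / κ) * ‖x s - p (s * τ)‖ ^ 2)
    (hdrift : ∀ m n, m ≤ n → n ≤ m + τ → n ≤ S * τ → ‖p m - p n‖ ^ 2 ≤ D) :
    ∀ t ≤ S * τ, ‖p t - x (t / τ)‖ ^ 2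
      ≤ 2 * (1 - 1 / (2 * κ)) ^ (t / τ) * ‖x 0 - p 0‖ ^ 2 + 2 * (4 * κ ^ 2 + 1) * D := by
  set a : ℕ → ℝ := fun s => ‖x s - p (s * τ)‖ ^ 2
  set r : ℝ := 1 - 1 / (2 * κ)
  have hr : 0 ≤ r := sub_nonneg.2 ((div_le_one (by positivity)).2 (by linarith))
  have hD : 0 ≤ D := by simpa using hdrift 0 0 le_rfl (Nat.zero_le _) (Nat.zero_le _)
  have hstep : ∀ s < S, a (s + 1) ≤ r * a s + (1 - r) * (4 * κ ^ 2 * D) := by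
    intro s hs
    have hrD : (1 - r) * (4 * κ ^ 2 * D) = 2 * κ * D := by
      simp only [r]; field_simp; ring
    simpa only [a, hrD, sub_add_sub_cancel] using norm_add_sq_le_of_norm_sq_le hκ (hcontr s hs)
      (hdrift (s * τ) ((s + 1) * τ) (by nlinarith) (by rw [add_mul, one_mul])
        (Nat.mul_le_mul_right τ hs))
  intro t ht
  set s := t / τ
  have hgap := le_pow_mul_add_of_le_mul_add hr hstep s
    ((Nat.div_le_div_right ht).trans (Nat.mul_div_cancel S hτ).le)
  have hnear := hdrift (s * τ) t (Nat.div_mul_le_self t τ) (Nat.lt_div_mul_add hτ).le ht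
  have hrD : 0 ≤ r ^ s * κ ^ 2 * D := by positivity
  calc ‖p t - x s‖ ^ 2 = ‖(x s - p (s * τ)) + (p (s * τ) - p t)‖ ^ 2 := by
        rw [sub_add_sub_cancel, norm_sub_rev]
    _ ≤ 2 * (a s + ‖p (s * τ) - p t‖ ^ 2) :=
        (pow_le_pow_left₀ (norm_nonneg _) (norm_add_le _ _) 2).trans add_sq_le
    _ ≤ 2 * ((r ^ s * a 0 + (1 - r ^ s) * (4 * κ ^ 2 * D)) + D) := by gcongr
    _ ≤ _ := by simp only [a, zero_mul]; linear_combination 8 * hrD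

end Tracking

theorem drfa_ga_dual_gap_recursion_general
    {E H : Type*} [NormedAddCommGroup E]
    [NormedAddCommGroup H] [InnerProductSpace ℝ H] [CompleteSpace H]
    (Λ : Set H) (hΛconv : Convex ℝ Λ)
    (proj : H → H)
    (hproj : ∀ x : H, proj x ∈ Λ ∧ ∀ y ∈ Λ, ‖x - proj x‖ ≤ ‖x - y‖)
    (F : E → H → ℝ) (μ L : ℝ) (hμ : 0 < μ) (hμL : μ < L)
    (κ : ℝ) (hκ : κ = L / μ)
    (hdiff : ∀ w : E, Differentiable ℝ (F w))
    (hconc : ∀ w : E, ∀ x y : H, ∀ a : ℝ, 0 ≤ a → a ≤ 1 →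
      a * F w x + (1 - a) * F w y + μ / 2 * a * (1 - a) * ‖x - y‖ ^ 2
        ≤ F w (a • x + (1 - a) • y))
    (lam : E → H) (hlam_mem : ∀ w : E, lam w ∈ Λ)
    (hlam_max : ∀ w : E, ∀ l : H, F w l ≤ F w (lam w))
    (hlip : ∀ w₁ w₂ : E, ∀ l₁ l₂ : H,
      ‖gradient (F w₁) l₁ - gradient (F w₂) l₂‖
        ≤ L * Real.sqrt (‖w₁ - w₂‖ ^ 2 + ‖l₁ - l₂‖ ^ 2))
    (η G : ℝ)
    (τ S T : ℕ) (hτ : 1 ≤ τ) (hT : T = S * τ)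
    (w : ℕ → E) (hw : ∀ t < T, ‖w (t + 1) - w t‖ ≤ η * G)
    (lamSeq : ℕ → H)
    (hupdate : ∀ s < S,
      lamSeq (s + 1) = proj (lamSeq s + (1 / L) • gradient (F (w (s * τ))) (lamSeq s))) :
    ∀ t ≤ T,
      ‖lam (w t) - lamSeq (t / τ)‖ ^ 2
        ≤ 2 * (1 - 1 / (2 * κ)) ^ (t / τ) * ‖lamSeq 0 - lam (w 0)‖ ^ 2
          + 2 * (4 * κ ^ 2 + 1) * κ ^ 2 * (τ : ℝ) ^ 2 * η ^ 2 * G ^ 2 := by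
  subst hT
  have hL : 0 < L := hμ.trans hμL
  have hsc : ∀ v, StrongConcaveOn univ μ (F v) := fun v => strongConcaveOn_univ_of_forall (hconc v)
  have hgrad : ∀ v, gradient (F v) (lam v) = 0 :=
    fun v => IsLocalMax.gradient_eq_zero (Eventually.of_forall (hlam_max v))
  have hlip_dual : ∀ v a b, ‖gradient (F v) a - gradient (F v) b‖ ≤ L * ‖a - b‖ :=
    fun v a b => by simpa using hlip v v a b
  have hlip_primal : ∀ v₁ v₂ l, ‖gradient (F v₁) l - gradient (F v₂) l‖ ≤ L * ‖v₁ - v₂‖ :=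
    fun v₁ v₂ l => by simpa using hlip v₁ v₂ l l
  have hcontr : ∀ s < S, ‖lamSeq (s + 1) - lam (w (s * τ))‖ ^ 2
      ≤ (1 - 1 / κ) * ‖lamSeq s - lam (w (s * τ))‖ ^ 2 := fun s hs => by
    rw [hupdate s hs, hκ, one_div_div]
    exact (hsc _).norm_proj_gradient_step_sub_sq_le hμ.le hL (hdiff _) (hlip_dual _) hΛconv hproj
      (hlam_mem _) (hgrad _) _
  have hdrift : ∀ m n, m ≤ n → n ≤ m + τ → n ≤ S * τ →
      ‖lam (w m) - lam (w n)‖ ^ 2 ≤ κ ^ 2 * (τ ^ 2 * (η * G) ^ 2) := fun m n hmn hnτ hnT => calc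
    ‖lam (w m) - lam (w n)‖ ^ 2 ≤ (κ * ‖w m - w n‖) ^ 2 := pow_le_pow_left₀ (norm_nonneg _)
      (hκ ▸ norm_maximizer_sub_le hμ hsc hdiff hgrad hlip_primal _ _) 2
    _ = κ ^ 2 * ‖w n - w m‖ ^ 2 := by rw [mul_pow, norm_sub_rev]
    _ ≤ κ ^ 2 * (τ ^ 2 * (η * G) ^ 2) := mul_le_mul_of_nonneg_left
      (norm_sub_sq_le_of_norm_succ_sub_le hmn hnτ fun k _ hk => hw k (by omega)) (sq_nonneg κ)
  intro t ht
  convert norm_target_sub_iterate_sq_le (hκ ▸ (one_lt_div hμ).2 hμL) hτ hcontr hdrift t ht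
    using 1
  ring

/-- **Dual optimality-gap recursion of DRFA-GA (decreasing optimal gap of `λ`).**
With `Λ ⊆ H` nonempty closed convex (projection `proj`), `F(w, ·)` differentiable,
`μ`-strongly concave on `H` with global maximizer `λ*(w) ∈ Λ`, the partial dual
gradient jointly `L`-Lipschitz in the product norm `√(‖·‖² + ‖·‖²)`, `0 < μ < L`,
`κ = L/μ`; if the primal iterates move at most `η·G` per step and
`λ^{(s+1)} = proj(λ^{(s)} + (1/L)·∇_λ F(w^{(sτ)}, λ^{(s)}))`, then for all `t ≤ T = Sτ`:
`‖λ*(w^{(t)}) − λ^{(⌊t/τ⌋)}‖² ≤ 2(1 − 1/(2κ))^{⌊t/τ⌋}‖λ^{(0)} − λ*(w^{(0)})‖²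
 + 2(4κ² + 1)κ²τ²η²G²`. -/
theorem drfa_ga_dual_gap_recursion
    {E H : Type*} [NormedAddCommGroup E] [InnerProductSpace ℝ E] [CompleteSpace E]
    [NormedAddCommGroup H] [InnerProductSpace ℝ H] [CompleteSpace H]
    (Λ : Set H) (hΛne : Λ.Nonempty) (hΛcl : IsClosed Λ) (hΛconv : Convex ℝ Λ)
    (proj : H → H)
    (hproj : ∀ x : H, proj x ∈ Λ ∧ ∀ y ∈ Λ, ‖x - proj x‖ ≤ ‖x - y‖)
    (F : E → H → ℝ) (μ L : ℝ) (hμ : 0 < μ) (hμL : μ < L)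
    (κ : ℝ) (hκ : κ = L / μ)
    (hdiff : ∀ w : E, Differentiable ℝ (F w))
    (hconc : ∀ w : E, ∀ x y : H, ∀ a : ℝ, 0 ≤ a → a ≤ 1 →
      a * F w x + (1 - a) * F w y + μ / 2 * a * (1 - a) * ‖x - y‖ ^ 2
        ≤ F w (a • x + (1 - a) • y))
    (lam : E → H) (hlam_mem : ∀ w : E, lam w ∈ Λ)
    (hlam_max : ∀ w : E, ∀ l : H, F w l ≤ F w (lam w))
    (hlip : ∀ w₁ w₂ : E, ∀ l₁ l₂ : H,
      ‖gradient (F w₁) l₁ - gradient (F w₂) l₂‖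
        ≤ L * Real.sqrt (‖w₁ - w₂‖ ^ 2 + ‖l₁ - l₂‖ ^ 2))
    (η G : ℝ) (hη : 0 < η) (hG : 0 ≤ G)
    (τ S T : ℕ) (hτ : 1 ≤ τ) (hS : 1 ≤ S) (hT : T = S * τ)
    (w : ℕ → E) (hw : ∀ t < T, ‖w (t + 1) - w t‖ ≤ η * G)
    (lamSeq : ℕ → H) (hlam0 : lamSeq 0 ∈ Λ)
    (hupdate : ∀ s < S,
      lamSeq (s + 1) = proj (lamSeq s + (1 / L) • gradient (F (w (s * τ))) (lamSeq s))) :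
    ∀ t ≤ T,
      ‖lam (w t) - lamSeq (t / τ)‖ ^ 2
        ≤ 2 * (1 - 1 / (2 * κ)) ^ (t / τ) * ‖lamSeq 0 - lam (w 0)‖ ^ 2
          + 2 * (4 * κ ^ 2 + 1) * κ ^ 2 * (τ : ℝ) ^ 2 * η ^ 2 * G ^ 2 :=
  drfa_ga_dual_gap_recursion_general Λ hΛconv proj hproj F μ L hμ hμL κ hκ hdiff hconc lam hlam_mem
    hlam_max hlip η G τ S T hτ hT w hw lamSeq hupdate
end
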